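/- arXiv:math/0211462 — 2 statements merged into one kernel-verified Lean document; each statement's English description precedes it below -/
import Mathlib

section
/- With the notation of the representation σ_n of Pol(Σ_q^{2n}) on ℓ²(ℕ)^{⊗n} (A_i = σ_n(a_i), T = σ_n(t)), for every 1 ≤ i ≤ n one has σ(τ)_i² · Π_{k<i} σ(τ)_k · Π_{k>i} σ(τ)_k² = T² + q² Σ_{ℓ<i} A_ℓ* A_ℓ as operators on ℓ²(ℕ)^{⊗n}. -/
open Finset

/-- The prefactor `∏_{k<i} q^{m_k} ∏_{k>i} q^{2 m_k}` coming from
`Π_{k<i} σ(τ)_k^{1/2} Π_{k>i} σ(τ)_k` acting on the basis vector `|m⟩`. -/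
noncomputable def tauPrefactor (q : ℝ) {n : ℕ} (i : Fin n) (m : Fin n → ℕ) : ℂ :=
  ∏ k : Fin n,
    (if k < i then (q : ℂ) ^ (m k) else if i < k then (q : ℂ) ^ (2 * m k) else 1)

/-- `A_i = σ_n(a_i) = σ(α)_i · Π_{k<i} σ(τ)_k^{1/2} · Π_{k>i} σ(τ)_k` on the span of
the orthonormal basis `{|m⟩ : m ∈ ℕⁿ}` of `ℓ²(ℕ)^{⊗n}`:
`A_i |m⟩ = q^{m_i-1}(1-q^{2m_i})^{1/2} ∏_{k<i} q^{m_k} ∏_{k>i} q^{2m_k} |m - δ_i⟩`. -/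
noncomputable def aOp (q : ℝ) {n : ℕ} (i : Fin n) :
    ((Fin n → ℕ) →₀ ℂ) →ₗ[ℂ] ((Fin n → ℕ) →₀ ℂ) :=
  Finsupp.lsum ℂ fun m =>
    (((q : ℂ) ^ (m i - 1) * (Real.sqrt (1 - q ^ (2 * m i)) : ℂ) * tauPrefactor q i m) •
      Finsupp.lsingle (Function.update m i (m i - 1)))

/-- The adjoint `A_i*`:
`A_i* |m⟩ = q^{m_i}(1-q^{2(m_i+1)})^{1/2} ∏_{k<i} q^{m_k} ∏_{k>i} q^{2m_k} |m + δ_i⟩`. -/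
noncomputable def aStarOp (q : ℝ) {n : ℕ} (i : Fin n) :
    ((Fin n → ℕ) →₀ ℂ) →ₗ[ℂ] ((Fin n → ℕ) →₀ ℂ) :=
  Finsupp.lsum ℂ fun m =>
    (((q : ℂ) ^ (m i) * (Real.sqrt (1 - q ^ (2 * (m i + 1))) : ℂ) * tauPrefactor q i m) •
      Finsupp.lsingle (Function.update m i (m i + 1)))

/-- `T = σ_n(t) = σ(τ)^{⊗n}`: `T|m⟩ = q^{2(m_1+⋯+m_n)}|m⟩`. -/
noncomputable def tOp (q : ℝ) {n : ℕ} :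
    ((Fin n → ℕ) →₀ ℂ) →ₗ[ℂ] ((Fin n → ℕ) →₀ ℂ) :=
  Finsupp.lsum ℂ fun m => (((q : ℂ) ^ (2 * ∑ k, m k)) • Finsupp.lsingle m)

/-- The diagonal operator `σ(τ)_i² · Π_{k<i} σ(τ)_k · Π_{k>i} σ(τ)_k²`:
`|m⟩ ↦ q^{4 m_i} ∏_{k<i} q^{2 m_k} ∏_{k>i} q^{4 m_k} |m⟩`. -/
noncomputable def tauSqOp (q : ℝ) {n : ℕ} (i : Fin n) :
    ((Fin n → ℕ) →₀ ℂ) →ₗ[ℂ] ((Fin n → ℕ) →₀ ℂ) :=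
  Finsupp.lsum ℂ fun m =>
    (((q : ℂ) ^ (4 * m i) *
        ∏ k : Fin n,
          (if k < i then (q : ℂ) ^ (2 * m k)
            else if i < k then (q : ℂ) ^ (4 * m k) else 1)) •
      Finsupp.lsingle m)

/-! ### Auxiliary material -/

/-- The squared prefactor. -/
noncomputable def qPref (q : ℝ) {n : ℕ} (i : Fin n) (m : Fin n → ℕ) : ℂ :=
  ∏ k : Fin n,
    (if k < i then (q : ℂ) ^ (2 * m k) else if i < k then (q : ℂ) ^ (4 * m k) else 1)

/-- Telescoping function. -/
noncomputable def fAux (q : ℝ) {n : ℕ} (m : Fin n → ℕ) (j : ℕ) : ℂ :=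
  ∏ k : Fin n, if (k : ℕ) < j then (q : ℂ) ^ (2 * m k) else (q : ℂ) ^ (4 * m k)

lemma tauPrefactor_sq (q : ℝ) {n : ℕ} (i : Fin n) (m : Fin n → ℕ) :
    tauPrefactor q i m * tauPrefactor q i m = qPref q i m := by
  rw [tauPrefactor, qPref, ← Finset.prod_mul_distrib]
  refine Finset.prod_congr rfl fun k _ => ?_
  split_ifs with h1 h2
  · rw [← pow_add]; congr 1; ring
  · rw [← pow_add]; congr 1; ring
  · ring

lemma tauPrefactor_update (q : ℝ) {n : ℕ} (i : Fin n) (m : Fin n → ℕ) (v : ℕ) :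
    tauPrefactor q i (Function.update m i v) = tauPrefactor q i m := by
  refine Finset.prod_congr rfl fun k _ => ?_
  rcases eq_or_ne k i with rfl | h
  · simp [lt_irrefl]
  · rw [Function.update_of_ne h]

lemma fAux_val (q : ℝ) {n : ℕ} (m : Fin n → ℕ) (i : Fin n) :
    fAux q m i = (q : ℂ) ^ (4 * m i) * qPref q i m := by
  rw [fAux, qPref, ← Finset.mul_prod_erase univ _ (mem_univ i),
    ← Finset.mul_prod_erase univ _ (mem_univ i)]
  simp only [lt_irrefl, if_false, mul_one, one_mul]
  congr 1
  apply Finset.prod_congr rfl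
  intro k hk
  have hk' : k ≠ i := (Finset.mem_erase.mp hk).1
  rcases lt_or_gt_of_ne hk' with h | h
  · rw [if_pos (Fin.lt_def.mp h), if_pos h]
  · rw [if_neg (not_lt.mpr (Fin.le_def.mp h.le)), if_neg (not_lt.mpr h.le), if_pos h]

lemma fAux_val_succ (q : ℝ) {n : ℕ} (m : Fin n → ℕ) (i : Fin n) :
    fAux q m ((i : ℕ) + 1) = (q : ℂ) ^ (2 * m i) * qPref q i m := by
  rw [fAux, qPref, ← Finset.mul_prod_erase univ _ (mem_univ i),
    ← Finset.mul_prod_erase univ _ (mem_univ i)]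
  rw [if_pos (Nat.lt_succ_self ((i : ℕ)))]
  simp only [lt_irrefl, if_false, mul_one, one_mul]
  congr 1
  apply Finset.prod_congr rfl
  intro k hk
  have hk' : k ≠ i := (Finset.mem_erase.mp hk).1
  rcases lt_or_gt_of_ne hk' with h | h
  · have hkn : (k : ℕ) < (i : ℕ) + 1 := Nat.lt_succ_of_lt (Fin.lt_def.mp h)
    rw [if_pos hkn, if_pos h]
  · have h1 : ¬ ((k : ℕ) < (i : ℕ) + 1) := by
      have := Fin.lt_def.mp h; omega
    rw [if_neg h1, if_neg (not_lt.mpr h.le), if_pos h]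

lemma fAux_zero (q : ℝ) {n : ℕ} (m : Fin n → ℕ) :
    fAux q m 0 = (q : ℂ) ^ (2 * ∑ k, m k) * (q : ℂ) ^ (2 * ∑ k, m k) := by
  rw [fAux]
  simp only [Nat.not_lt_zero, if_false]
  rw [Finset.prod_pow_eq_pow_sum, ← pow_add]
  congr 1
  rw [← Finset.mul_sum]
  ring

/-- The key scalar identity, via telescoping. -/
lemma scalar_key (q : ℝ) {n : ℕ} (i : Fin n) (m : Fin n → ℕ) :
    (q : ℂ) ^ (4 * m i) * qPref q i m
      = (q : ℂ) ^ (2 * ∑ k, m k) * (q : ℂ) ^ (2 * ∑ k, m k)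
        + ∑ ℓ ∈ univ.filter (· < i),
            (((q : ℂ) ^ (2 * m ℓ) - (q : ℂ) ^ (4 * m ℓ)) * qPref q ℓ m) := by
  have hterm : ∀ ℓ : Fin n,
      ((q : ℂ) ^ (2 * m ℓ) - (q : ℂ) ^ (4 * m ℓ)) * qPref q ℓ m
        = fAux q m ((ℓ : ℕ) + 1) - fAux q m ℓ := by
    intro ℓ
    rw [fAux_val, fAux_val_succ, sub_mul]
  have hsum : ∑ ℓ ∈ univ.filter (· < i),
      (((q : ℂ) ^ (2 * m ℓ) - (q : ℂ) ^ (4 * m ℓ)) * qPref q ℓ m)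
      = fAux q m (i : ℕ) - fAux q m 0 := by
    calc ∑ ℓ ∈ univ.filter (· < i),
          (((q : ℂ) ^ (2 * m ℓ) - (q : ℂ) ^ (4 * m ℓ)) * qPref q ℓ m)
        = ∑ ℓ ∈ univ.filter (· < i), (fAux q m ((ℓ : ℕ) + 1) - fAux q m ℓ) :=
          Finset.sum_congr rfl fun ℓ _ => hterm ℓ
      _ = ∑ ℓ : Fin n, (if (ℓ : ℕ) < (i : ℕ) then
              fAux q m ((ℓ : ℕ) + 1) - fAux q m ℓ else 0) := by
          rw [Finset.sum_filter]
          exact Finset.sum_congr rfl fun ℓ _ => if_congr Fin.lt_def rfl rfl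
      _ = ∑ j ∈ range n, (if j < (i : ℕ) then fAux q m (j + 1) - fAux q m j else 0) :=
          Fin.sum_univ_eq_sum_range
            (fun j => if j < (i : ℕ) then fAux q m (j + 1) - fAux q m j else 0) n
      _ = ∑ j ∈ (range n).filter (· < (i : ℕ)), (fAux q m (j + 1) - fAux q m j) :=
          (Finset.sum_filter _ _).symm
      _ = ∑ j ∈ range (i : ℕ), (fAux q m (j + 1) - fAux q m j) := by
          congr 1
          ext j
          simp only [Finset.mem_filter, Finset.mem_range]
          constructor
          · rintro ⟨_, h⟩; exact h
          · intro h; exact ⟨h.trans i.isLt, h⟩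
      _ = fAux q m (i : ℕ) - fAux q m 0 := Finset.sum_range_sub _ _
  rw [← fAux_val, hsum, ← fAux_zero]
  ring

lemma tauSqOp_single (q : ℝ) {n : ℕ} (i : Fin n) (m : Fin n → ℕ) (b : ℂ) :
    tauSqOp q i (Finsupp.single m b)
      = ((q : ℂ) ^ (4 * m i) * qPref q i m) • Finsupp.single m b := by
  rw [tauSqOp, Finsupp.lsum_single, LinearMap.smul_apply, Finsupp.lsingle_apply, qPref]

lemma tOp_single (q : ℝ) {n : ℕ} (m : Fin n → ℕ) (b : ℂ) :
    tOp q (Finsupp.single m b)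
      = ((q : ℂ) ^ (2 * ∑ k, m k)) • Finsupp.single m b := by
  rw [tOp, Finsupp.lsum_single, LinearMap.smul_apply, Finsupp.lsingle_apply]

lemma aOp_single (q : ℝ) {n : ℕ} (i : Fin n) (m : Fin n → ℕ) (b : ℂ) :
    aOp q i (Finsupp.single m b)
      = ((q : ℂ) ^ (m i - 1) * (Real.sqrt (1 - q ^ (2 * m i)) : ℂ) * tauPrefactor q i m) •
          Finsupp.single (Function.update m i (m i - 1)) b := by
  rw [aOp, Finsupp.lsum_single, LinearMap.smul_apply, Finsupp.lsingle_apply]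

lemma aStarOp_single (q : ℝ) {n : ℕ} (i : Fin n) (m : Fin n → ℕ) (b : ℂ) :
    aStarOp q i (Finsupp.single m b)
      = ((q : ℂ) ^ (m i) * (Real.sqrt (1 - q ^ (2 * (m i + 1))) : ℂ) * tauPrefactor q i m) •
          Finsupp.single (Function.update m i (m i + 1)) b := by
  rw [aStarOp, Finsupp.lsum_single, LinearMap.smul_apply, Finsupp.lsingle_apply]

lemma aStarA_single (q : ℝ) (hq0 : 0 < q) (hq1 : q < 1) {n : ℕ} (ℓ : Fin n)
    (m : Fin n → ℕ) (b : ℂ) :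
    (q : ℂ) ^ 2 • (aStarOp q ℓ) (aOp q ℓ (Finsupp.single m b))
      = (((q : ℂ) ^ (2 * m ℓ) - (q : ℂ) ^ (4 * m ℓ)) * qPref q ℓ m) • Finsupp.single m b := by
  rw [aOp_single, map_smul, aStarOp_single]
  rcases h : m ℓ with _ | s
  · -- m ℓ = 0 : the coefficient vanishes
    simp [h, Complex.ofReal_zero]
  · -- m ℓ = s + 1
    have hm : Function.update m ℓ (s + 1) = m := by
      rw [← h]; exact Function.update_eq_self ℓ m
    simp only [Nat.add_sub_cancel, Function.update_self, Function.update_idem]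
    rw [hm, tauPrefactor_update, smul_smul, smul_smul]
    congr 1
    have hx : (0 : ℝ) ≤ 1 - q ^ (2 * (s + 1)) := by
      have : q ^ (2 * (s + 1)) ≤ 1 := pow_le_one₀ hq0.le hq1.le
      linarith
    have hXX : (Real.sqrt (1 - q ^ (2 * (s + 1))) : ℂ) *
        (Real.sqrt (1 - q ^ (2 * (s + 1))) : ℂ) = 1 - (q : ℂ) ^ (2 * (s + 1)) := by
      rw [← Complex.ofReal_mul, Real.mul_self_sqrt hx]
      push_cast; ring
    have hPP := tauPrefactor_sq q ℓ m
    set X : ℂ := (Real.sqrt (1 - q ^ (2 * (s + 1))) : ℂ) with hX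
    set P : ℂ := tauPrefactor q ℓ m with hPdef
    have e1 : (q : ℂ) ^ 2 * ((q : ℂ) ^ s * X * P) * ((q : ℂ) ^ s * X * P)
        = (X * X) * ((q : ℂ) ^ (2 * (s + 1))) * (P * P) := by ring
    calc (q : ℂ) ^ 2 * ((q : ℂ) ^ s * X * P) * ((q : ℂ) ^ s * X * P)
        = (X * X) * ((q : ℂ) ^ (2 * (s + 1))) * (P * P) := e1
      _ = ((q : ℂ) ^ (2 * (s + 1)) - (q : ℂ) ^ (4 * (s + 1))) * qPref q ℓ m := by
          rw [hXX, hPP]; ring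

/-- for every `i`,
`σ(τ)_i² Π_{k<i} σ(τ)_k Π_{k>i} σ(τ)_k² = T² + q² ∑_{ℓ<i} A_ℓ* A_ℓ`. -/
theorem quantum_even_sphere_inductive_relation (q : ℝ) (hq0 : 0 < q) (hq1 : q < 1)
    (n : ℕ) :
    ∀ i : Fin n,
      tauSqOp q i
        = tOp q ∘ₗ tOp q
          + ((q : ℂ) ^ 2) •
              ∑ ℓ ∈ univ.filter (· < i), aStarOp q ℓ ∘ₗ aOp q ℓ := by
  intro i
  apply Finsupp.lhom_ext
  intro m b
  rw [LinearMap.add_apply, LinearMap.comp_apply, tOp_single, map_smul, tOp_single,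
    smul_smul, LinearMap.smul_apply, LinearMap.sum_apply, tauSqOp_single]
  have hsum : ((q : ℂ) ^ 2) • ∑ ℓ ∈ univ.filter (· < i),
      (aStarOp q ℓ ∘ₗ aOp q ℓ) (Finsupp.single m b)
      = ∑ ℓ ∈ univ.filter (· < i),
          (((q : ℂ) ^ (2 * m ℓ) - (q : ℂ) ^ (4 * m ℓ)) * qPref q ℓ m) •
            Finsupp.single m b := by
    rw [Finset.smul_sum]
    refine Finset.sum_congr rfl fun ℓ _ => ?_
    rw [LinearMap.comp_apply]
    exact aStarA_single q hq0 hq1 ℓ m b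
  rw [hsum, ← Finset.sum_smul, ← add_smul, scalar_key]
end

section
/- With Pol(ℝ_q^{2n+1}), φ_n, e_{2k}, C_{2k} defined as above, for each 0 ≤ k ≤ n one has the matrix identity (e_{2k})² - e_{2k} = [q² Σ_{i=1}^k x_i* x_i - y(1-y)] · q^{-2} (C_{2k})² in M_{2^k}(Pol(ℝ_q^{2n+1})). In particular, in the quotient algebra Pol(Σ_q^{2n}) = Pol(ℝ_q^{2n+1})/⟨q² Σ_{i=1}^n x_i*x_i - y + y²⟩, the image G_{2n} of e_{2n} is an idempotent: G_{2n}² = G_{2n}. -/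
set_option linter.unusedSectionVars false
set_option maxHeartbeats 1000000


open Matrix

section AuxLemmas

variable {R : Type*} [Ring R] [Algebra ℂ R] {m : Type*} [Fintype m] [DecidableEq m]

lemma aux_map_alg_smul (c : ℂ) (M : Matrix m m ℂ) :
    ((c • M).map (algebraMap ℂ R)) = c • M.map (algebraMap ℂ R) := by
  ext i j
  simp only [Matrix.map_apply, Matrix.smul_apply]
  simp [Algebra.smul_def, smul_eq_mul, _root_.map_mul]

lemma aux_map_alg_one :
    ((1 : Matrix m m ℂ).map (algebraMap ℂ R)) = 1 := by
  ext i j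
  by_cases h : i = j <;> simp [Matrix.map_apply, Matrix.one_apply, h]

lemma aux_alg_mul_smul (M : Matrix m m ℂ) (b : R) (N : Matrix m m R) :
    M.map (algebraMap ℂ R) * (b • N) = b • (M.map (algebraMap ℂ R) * N) := by
  ext i j
  simp only [Matrix.mul_apply, Matrix.smul_apply, smul_eq_mul, Finset.mul_sum]
  refine Finset.sum_congr rfl fun k _ => ?_
  rw [Matrix.map_apply, ← mul_assoc, Algebra.commutes, mul_assoc]

lemma aux_alg_mul_smul_one (M : Matrix m m ℂ) (a : R) :
    M.map (algebraMap ℂ R) * (a • 1) = a • M.map (algebraMap ℂ R) := by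
  rw [aux_alg_mul_smul, mul_one]

lemma aux_smul_alg_mul (a b : R) (M N : Matrix m m ℂ) :
    (a • M.map (algebraMap ℂ R)) * (b • N.map (algebraMap ℂ R))
      = (a * b) • (M * N).map (algebraMap ℂ R) := by
  rw [Matrix.smul_mul, aux_alg_mul_smul, smul_smul, ← Matrix.map_mul]

lemma aux_smul_one_mul_smul_one (a b : R) :
    (a • (1 : Matrix m m R)) * (b • 1) = (a * b) • 1 := by
  rw [Matrix.smul_mul, Matrix.one_mul, smul_smul]

lemma aux_smul_smulc (r : R) (c : ℂ) (M : Matrix m m R) :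
    r • (c • M) = (c • r) • M := by
  ext i j
  simp only [Matrix.smul_apply]
  simp only [smul_eq_mul, Algebra.smul_def]
  rw [← mul_assoc, Algebra.commutes, mul_assoc]

lemma aux_smul_cancel {M : Type*} [AddCommMonoid M] [Module ℂ M] {c : ℂ} (hc : c ≠ 0)
    {a b : M} (h : c • a = c • b) : a = b := by
  have := congrArg (fun z => c⁻¹ • z) h
  simpa [inv_smul_smul₀ hc] using this

variable (φ : R →ₐ[ℂ] R)

lemma aux_map_phi_mul (M N : Matrix m m R) : (M * N).map φ = M.map φ * N.map φ :=
  Matrix.map_mul (f := (φ : R →+* R))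

lemma aux_map_phi_sub (M N : Matrix m m R) : (M - N).map φ = M.map φ - N.map φ :=
  Matrix.map_sub φ (map_sub φ) M N

lemma aux_map_phi_one : (1 : Matrix m m R).map φ = 1 := by
  ext i j
  by_cases h : i = j <;> simp [Matrix.map_apply, Matrix.one_apply, h]

lemma aux_map_phi_smul_alg (a : R) (M : Matrix m m ℂ) :
    (a • M.map (algebraMap ℂ R)).map φ = φ a • M.map (algebraMap ℂ R) := by
  ext i j
  simp [Matrix.map_apply, Matrix.smul_apply, smul_eq_mul, _root_.map_mul, AlgHom.commutes]

lemma aux_map_phi_smul_one (a : R) : ((a • 1 : Matrix m m R)).map φ = φ a • 1 := by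
  ext i j
  by_cases h : i = j <;> simp [Matrix.map_apply, Matrix.one_apply, h]

end AuxLemmas

section Reindex

variable {α β : Type*} {m m' : Type*} [Fintype m] [DecidableEq m] [Fintype m'] [DecidableEq m']

lemma aux_reindex_mul [NonAssocSemiring α] (e : m ≃ m') (M N : Matrix m m α) :
    reindex e e M * reindex e e N = reindex e e (M * N) := by
  simp [Matrix.reindex_apply]

lemma aux_reindex_one [NonAssocSemiring α] (e : m ≃ m') :
    reindex e e (1 : Matrix m m α) = 1 := by
  simp [Matrix.reindex_apply]

lemma aux_reindex_smul {S : Type*} [SMul S α] (e : m ≃ m') (c : S) (M : Matrix m m α) :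
    reindex e e (c • M) = c • reindex e e M := by
  ext i j; simp [Matrix.reindex_apply]

lemma aux_reindex_sub [Sub α] (e : m ≃ m') (M N : Matrix m m α) :
    reindex e e (M - N) = reindex e e M - reindex e e N := by
  ext i j; simp [Matrix.reindex_apply, Matrix.sub_apply]

lemma aux_reindex_map (f : α → β) (e : m ≃ m') (M : Matrix m m α) :
    (reindex e e M).map f = reindex e e (M.map f) := by
  ext i j; simp [Matrix.reindex_apply, Matrix.map_apply]

lemma aux_reindex_inj (e : m ≃ m') {M N : Matrix m m α} :
    reindex e e M = reindex e e N ↔ M = N :=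
  (Matrix.reindex e e).injective.eq_iff

lemma aux_fromBlocks_sub {l o : Type*} [Sub α] (A A' : Matrix l l α) (B B' : Matrix l o α)
    (C C' : Matrix o l α) (D D' : Matrix o o α) :
    fromBlocks A B C D - fromBlocks A' B' C' D'
      = fromBlocks (A - A') (B - B') (C - C') (D - D') := by
  ext (i | i) (j | j) <;> simp [Matrix.sub_apply]

end Reindex


/-- Identification `Fin 2^k ⊕ Fin 2^k ≃ Fin 2^{k+1}` used for block matrices. -/
def powEquiv (k : ℕ) : Fin (2 ^ k) ⊕ Fin (2 ^ k) ≃ Fin (2 ^ (k + 1)) :=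
  finSumFinEquiv.trans (finCongr (by rw [pow_succ, mul_two]))

/-- The scalar matrices `C_{2k} ∈ M_{2^k}(ℂ)`: `C_0 = q`,
`C_{2(k+1)} = diag(C_{2k}, q C_{2k})`. -/
noncomputable def cMat (q : ℝ) : (k : ℕ) → Matrix (Fin (2 ^ k)) (Fin (2 ^ k)) ℂ
  | 0 => (q : ℂ) • 1
  | k + 1 =>
    Matrix.reindex (powEquiv k) (powEquiv k)
      (Matrix.fromBlocks (cMat q k) 0 0 ((q : ℂ) • cMat q k))

/-- The recursively defined matrices `e_{2k} ∈ M_{2^k}(R)`: `e_0 = 1 - y` and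
`e_{2(k+1)} = [[e_{2k}, C_{2k} x_{k+1}*], [C_{2k} x_{k+1}, 1 - φ(e_{2k})]]`
(0-indexed: the step from `k` to `k+1` uses `x k`, `xs k = x k *`). -/
noncomputable def eMat {R : Type*} [Ring R] [Algebra ℂ R] (q : ℝ) (y : R)
    (x xs : ℕ → R) (φ : R →ₐ[ℂ] R) :
    (k : ℕ) → Matrix (Fin (2 ^ k)) (Fin (2 ^ k)) R
  | 0 => (1 - y) • 1
  | k + 1 =>
    Matrix.reindex (powEquiv k) (powEquiv k)
      (Matrix.fromBlocks (eMat q y x xs φ k)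
        ((cMat q k).map (algebraMap ℂ R) * (xs k • 1))
        ((cMat q k).map (algebraMap ℂ R) * (x k • 1))
        (1 - (eMat q y x xs φ k).map φ))

/-- `(e_{2k})² - e_{2k} = [q² ∑_{i≤k} x_i* x_i - y(1-y)] q⁻² (C_{2k})²`
for all `k ≤ n`; in particular if the sphere relation `q² ∑_{i=1}^n x_i* x_i = y - y²`
holds (as it does for the images in the quotient `Pol(Σ_q^{2n})`), then
`G_{2n} = e_{2n}` is an idempotent. -/
theorem eMat_approximate_idempotent {R : Type*} [Ring R] [StarRing R] [Algebra ℂ R]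
    [StarModule ℂ R] (q : ℝ) (hq0 : 0 < q) (hq1 : q < 1) (n : ℕ)
    (y : R) (hy : star y = y) (x : ℕ → R)
    (hxy : ∀ i < n, x i * y = ((q : ℂ) ^ 2) • (y * x i))
    (hxx : ∀ i j, i < j → j < n → x i * x j = ((q : ℂ))⁻¹ • (x j * x i))
    (hxxs : ∀ i j, i < j → j < n →
      x i * star (x j) = ((q : ℂ) ^ 3) • (star (x j) * x i))
    (hxxsi : ∀ i < n,
      x i * star (x i)
        = ((q : ℂ) ^ 2) • (star (x i) * x i)
          + ((q : ℂ) ^ 2 * (1 - (q : ℂ) ^ 2)) •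
              ∑ ℓ ∈ Finset.range i, star (x ℓ) * x ℓ
          + (1 - (q : ℂ) ^ 2) • (y * y))
    (φ : R →ₐ[ℂ] R)
    (hφx : ∀ i, φ (x i) = ((q : ℂ) ^ 2) • x i)
    (hφxs : ∀ i, φ (star (x i)) = ((q : ℂ) ^ 2) • star (x i))
    (hφy : φ y = ((q : ℂ) ^ 2) • y) :
    (∀ k ≤ n,
      eMat q y x (fun i => star (x i)) φ k ^ 2 - eMat q y x (fun i => star (x i)) φ k
        = ((((q : ℂ) ^ 2) • ∑ i ∈ Finset.range k, star (x i) * x i) - y * (1 - y)) •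
            ((((q : ℂ) ^ 2)⁻¹) • (cMat q k ^ 2).map (algebraMap ℂ R))) ∧
    ((((q : ℂ) ^ 2) • ∑ i ∈ Finset.range n, star (x i) * x i = y - y ^ 2) →
      eMat q y x (fun i => star (x i)) φ n ^ 2
        = eMat q y x (fun i => star (x i)) φ n) := by
  have hq : (q : ℂ) ≠ 0 := by
    simpa using Complex.ofReal_ne_zero.mpr hq0.ne'
  have hq2 : ((q : ℂ) ^ 2) ≠ 0 := pow_ne_zero 2 hq
  -- derived commutation relations
  have hyxs : ∀ ℓ < n, y * star (x ℓ) = ((q : ℂ) ^ 2) • (star (x ℓ) * y) := by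
    intro ℓ hℓ
    have h := congrArg star (hxy ℓ hℓ)
    simpa [StarMul.star_mul, hy, star_smul, Complex.star_def, map_pow, Complex.conj_ofReal] using h
  have hxsxs : ∀ k ℓ, k < ℓ → ℓ < n →
      star (x k) * star (x ℓ) = (q : ℂ) • (star (x ℓ) * star (x k)) := by
    intro k ℓ hkl hln
    have h := congrArg star (hxx k ℓ hkl hln)
    simp only [StarMul.star_mul, star_smul] at h
    rw [show star ((q : ℂ)⁻¹) = (q : ℂ)⁻¹ by
      simp [Complex.star_def, map_inv₀, Complex.conj_ofReal]] at h
    exact (inv_smul_eq_iff₀ hq).mp h.symm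
  have hxlxk : ∀ k ℓ, k < ℓ → ℓ < n → x ℓ * x k = (q : ℂ) • (x k * x ℓ) := by
    intro k ℓ hkl hln
    exact (inv_smul_eq_iff₀ hq).mp (hxx k ℓ hkl hln).symm
  have hxxs2 : ∀ k ℓ, k < ℓ → ℓ < n →
      x ℓ * star (x k) = ((q : ℂ) ^ 3) • (star (x k) * x ℓ) := by
    intro k ℓ hkl hln
    have h := congrArg star (hxxs k ℓ hkl hln)
    simpa [StarMul.star_mul, star_smul, star_star, Complex.star_def, map_pow,
      Complex.conj_ofReal] using h
  -- the commutation lemma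
  have comm : ∀ k, ∀ ℓ, k ≤ ℓ → ℓ < n →
      (eMat q y x (fun i => star (x i)) φ k * (star (x ℓ) • (cMat q k).map (algebraMap ℂ R))
        = (star (x ℓ) • (cMat q k).map (algebraMap ℂ R))
            * (eMat q y x (fun i => star (x i)) φ k).map φ)
      ∧ ((x ℓ • (cMat q k).map (algebraMap ℂ R)) * eMat q y x (fun i => star (x i)) φ k
        = (eMat q y x (fun i => star (x i)) φ k).map φ
            * (x ℓ • (cMat q k).map (algebraMap ℂ R))) := by
    intro k
    induction k with
    | zero =>
      intro ℓ _ hln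
      have hC0 : (cMat q 0).map (algebraMap ℂ R)
          = (q : ℂ) • (1 : Matrix (Fin (2 ^ 0)) (Fin (2 ^ 0)) R) := by
        show (((q : ℂ) • 1 : Matrix _ _ ℂ)).map _ = _
        rw [aux_map_alg_smul, aux_map_alg_one]
      have hE0 : eMat q y x (fun i => star (x i)) φ 0
          = (1 - y) • (1 : Matrix (Fin (2 ^ 0)) (Fin (2 ^ 0)) R) := rfl
      have hE0φ : (eMat q y x (fun i => star (x i)) φ 0).map φ
          = (1 - (q : ℂ) ^ 2 • y) • (1 : Matrix (Fin (2 ^ 0)) (Fin (2 ^ 0)) R) := by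
        rw [hE0, aux_map_phi_smul_one, map_sub, _root_.map_one, hφy]
      constructor
      · rw [hE0φ, hE0, hC0, aux_smul_smulc, aux_smul_one_mul_smul_one,
          aux_smul_one_mul_smul_one]
        congr 1
        rw [mul_smul_comm, smul_mul_assoc]
        congr 1
        rw [sub_mul, one_mul, mul_sub, mul_one, hyxs ℓ hln, mul_smul_comm]
      · rw [hE0φ, hE0, hC0, aux_smul_smulc, aux_smul_one_mul_smul_one,
          aux_smul_one_mul_smul_one]
        congr 1
        rw [smul_mul_assoc, mul_smul_comm]
        congr 1
        rw [mul_sub, mul_one, sub_mul, one_mul, hxy ℓ hln, smul_mul_assoc]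
    | succ k IH =>
      intro ℓ hkl hln
      have hkl' : k < ℓ := Nat.lt_of_succ_le hkl
      have hkn : k < n := hkl'.trans hln
      obtain ⟨IH1, IH2⟩ := IH ℓ (le_of_lt hkl') hln
      have hE1 : eMat q y x (fun i => star (x i)) φ (k + 1)
          = reindex (powEquiv k) (powEquiv k)
              (fromBlocks (eMat q y x (fun i => star (x i)) φ k)
                (star (x k) • (cMat q k).map (algebraMap ℂ R))
                (x k • (cMat q k).map (algebraMap ℂ R))
                (1 - (eMat q y x (fun i => star (x i)) φ k).map φ)) := by
        have h0 : eMat q y x (fun i => star (x i)) φ (k + 1)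
            = reindex (powEquiv k) (powEquiv k)
                (fromBlocks (eMat q y x (fun i => star (x i)) φ k)
                  ((cMat q k).map (algebraMap ℂ R) * (star (x k) • 1))
                  ((cMat q k).map (algebraMap ℂ R) * (x k • 1))
                  (1 - (eMat q y x (fun i => star (x i)) φ k).map φ)) := rfl
        rw [h0, aux_alg_mul_smul_one, aux_alg_mul_smul_one]
      have hC1 : (cMat q (k + 1)).map (algebraMap ℂ R)
          = reindex (powEquiv k) (powEquiv k)
              (fromBlocks ((cMat q k).map (algebraMap ℂ R)) 0 0
                ((q : ℂ) • (cMat q k).map (algebraMap ℂ R))) := by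
        have h0 : cMat q (k + 1) = reindex (powEquiv k) (powEquiv k)
            (fromBlocks (cMat q k) 0 0 ((q : ℂ) • cMat q k)) := rfl
        rw [h0, aux_reindex_map, Matrix.fromBlocks_map, aux_map_alg_smul,
          Matrix.map_zero _ (map_zero (algebraMap ℂ R))]
      have hφE1 : (eMat q y x (fun i => star (x i)) φ (k + 1)).map φ
          = reindex (powEquiv k) (powEquiv k)
              (fromBlocks ((eMat q y x (fun i => star (x i)) φ k).map φ)
                ((((q : ℂ) ^ 2) • star (x k)) • (cMat q k).map (algebraMap ℂ R))
                ((((q : ℂ) ^ 2) • x k) • (cMat q k).map (algebraMap ℂ R))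
                (1 - ((eMat q y x (fun i => star (x i)) φ k).map φ).map φ)) := by
        rw [hE1, aux_reindex_map, Matrix.fromBlocks_map, aux_map_phi_smul_alg,
          aux_map_phi_smul_alg, aux_map_phi_sub, aux_map_phi_one, hφxs, hφx]
      have IH1φ : (eMat q y x (fun i => star (x i)) φ k).map φ
            * (star (x ℓ) • (cMat q k).map (algebraMap ℂ R))
          = (star (x ℓ) • (cMat q k).map (algebraMap ℂ R))
            * ((eMat q y x (fun i => star (x i)) φ k).map φ).map φ := by
        have h := congrArg (fun M => M.map φ) IH1
        rw [aux_map_phi_mul, aux_map_phi_mul, aux_map_phi_smul_alg, hφxs,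
          smul_assoc, Matrix.mul_smul, Matrix.smul_mul] at h
        exact aux_smul_cancel hq2 h
      have IH2φ : (x ℓ • (cMat q k).map (algebraMap ℂ R))
            * (eMat q y x (fun i => star (x i)) φ k).map φ
          = ((eMat q y x (fun i => star (x i)) φ k).map φ).map φ
            * (x ℓ • (cMat q k).map (algebraMap ℂ R)) := by
        have h := congrArg (fun M => M.map φ) IH2
        rw [aux_map_phi_mul, aux_map_phi_mul, aux_map_phi_smul_alg, hφx,
          smul_assoc, Matrix.smul_mul, Matrix.mul_smul] at h
        exact aux_smul_cancel hq2 h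
      constructor
      · rw [hφE1, hE1, hC1, ← aux_reindex_smul, aux_reindex_mul, aux_reindex_mul,
          aux_reindex_inj, Matrix.fromBlocks_smul]
        simp only [smul_zero]
        rw [Matrix.fromBlocks_multiply, Matrix.fromBlocks_multiply]
        simp only [Matrix.mul_zero, Matrix.zero_mul, add_zero, zero_add]
        rw [aux_smul_smulc (star (x ℓ)) (q : ℂ) ((cMat q k).map (algebraMap ℂ R))]
        rw [Matrix.fromBlocks_inj]
        refine ⟨IH1, ?_, ?_, ?_⟩
        · rw [aux_smul_alg_mul, aux_smul_alg_mul]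
          congr 1
          rw [mul_smul_comm, hxsxs k ℓ hkl' hln, smul_smul, mul_smul_comm, ← pow_two]
        · rw [aux_smul_alg_mul, aux_smul_alg_mul]
          congr 1
          rw [hxxs k ℓ hkl' hln, smul_mul_assoc, mul_smul_comm, smul_smul, pow_succ']
        · rw [Matrix.sub_mul, Matrix.mul_sub, Matrix.one_mul, Matrix.mul_one]
          congr 1
          rw [smul_assoc, Matrix.mul_smul, Matrix.smul_mul, IH1φ]
      · rw [hφE1, hE1, hC1, ← aux_reindex_smul, aux_reindex_mul, aux_reindex_mul,
          aux_reindex_inj, Matrix.fromBlocks_smul]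
        simp only [smul_zero]
        rw [Matrix.fromBlocks_multiply, Matrix.fromBlocks_multiply]
        simp only [Matrix.mul_zero, Matrix.zero_mul, add_zero, zero_add]
        rw [aux_smul_smulc (x ℓ) (q : ℂ) ((cMat q k).map (algebraMap ℂ R))]
        rw [Matrix.fromBlocks_inj]
        refine ⟨IH2, ?_, ?_, ?_⟩
        · rw [aux_smul_alg_mul, aux_smul_alg_mul]
          congr 1
          rw [hxxs2 k ℓ hkl' hln, smul_mul_assoc, mul_smul_comm, smul_smul, pow_succ]
        · rw [aux_smul_alg_mul, aux_smul_alg_mul]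
          congr 1
          rw [smul_mul_assoc, hxlxk k ℓ hkl' hln, smul_smul, smul_mul_assoc, ← pow_two]
        · rw [Matrix.mul_sub, Matrix.sub_mul, Matrix.one_mul, Matrix.mul_one]
          congr 1
          rw [smul_assoc, Matrix.smul_mul, Matrix.mul_smul, IH2φ]
  -- the main induction
  have main : ∀ k, k ≤ n →
      eMat q y x (fun i => star (x i)) φ k ^ 2 - eMat q y x (fun i => star (x i)) φ k
        = ((((q : ℂ) ^ 2) • ∑ i ∈ Finset.range k, star (x i) * x i) - y * (1 - y)) •
            ((((q : ℂ) ^ 2)⁻¹) • (cMat q k ^ 2).map (algebraMap ℂ R)) := by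
    intro k
    induction k with
    | zero =>
      intro _
      have hE0 : eMat q y x (fun i => star (x i)) φ 0
          = (1 - y) • (1 : Matrix (Fin (2 ^ 0)) (Fin (2 ^ 0)) R) := rfl
      have hC0 : cMat q 0 = (q : ℂ) • (1 : Matrix (Fin (2 ^ 0)) (Fin (2 ^ 0)) ℂ) := rfl
      have hE0sq : ((1 - y) • (1 : Matrix (Fin (2 ^ 0)) (Fin (2 ^ 0)) R)) ^ 2
          = ((1 - y) * (1 - y)) • 1 := by
        rw [pow_two, aux_smul_one_mul_smul_one]
      have hC0sq : (cMat q 0) ^ 2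
          = ((q : ℂ) * (q : ℂ)) • (1 : Matrix (Fin (2 ^ 0)) (Fin (2 ^ 0)) ℂ) := by
        rw [hC0, pow_two, aux_smul_one_mul_smul_one]
      rw [hE0, hE0sq, hC0sq, aux_map_alg_smul, aux_map_alg_one, Finset.range_zero,
        Finset.sum_empty, smul_zero, zero_sub, ← sub_smul, smul_smul]
      rw [show ((q : ℂ) ^ 2)⁻¹ * ((q : ℂ) * (q : ℂ)) = 1 by
        rw [← pow_two]; exact inv_mul_cancel₀ hq2, one_smul]
      congr 1
      noncomm_ring
    | succ k IHm =>
      intro hk1n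
      have hkn : k < n := Nat.lt_of_succ_le hk1n
      have hIH := IHm (Nat.le_of_succ_le hk1n)
      obtain ⟨hc1, hc2⟩ := comm k k le_rfl hkn
      have hE1 : eMat q y x (fun i => star (x i)) φ (k + 1)
          = reindex (powEquiv k) (powEquiv k)
              (fromBlocks (eMat q y x (fun i => star (x i)) φ k)
                (star (x k) • (cMat q k).map (algebraMap ℂ R))
                (x k • (cMat q k).map (algebraMap ℂ R))
                (1 - (eMat q y x (fun i => star (x i)) φ k).map φ)) := by
        have h0 : eMat q y x (fun i => star (x i)) φ (k + 1)
            = reindex (powEquiv k) (powEquiv k)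
                (fromBlocks (eMat q y x (fun i => star (x i)) φ k)
                  ((cMat q k).map (algebraMap ℂ R) * (star (x k) • 1))
                  ((cMat q k).map (algebraMap ℂ R) * (x k • 1))
                  (1 - (eMat q y x (fun i => star (x i)) φ k).map φ)) := rfl
        rw [h0, aux_alg_mul_smul_one, aux_alg_mul_smul_one]
      have hC2 : (cMat q (k + 1)) ^ 2 = reindex (powEquiv k) (powEquiv k)
          (fromBlocks (cMat q k ^ 2) 0 0
            (((q : ℂ) ^ 2) • (cMat q k ^ 2))) := by
        have h0 : cMat q (k + 1) = reindex (powEquiv k) (powEquiv k)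
            (fromBlocks (cMat q k) 0 0 ((q : ℂ) • cMat q k)) := rfl
        rw [pow_two, h0, aux_reindex_mul, Matrix.fromBlocks_multiply]
        simp only [Matrix.mul_zero, Matrix.zero_mul, add_zero, zero_add]
        rw [Matrix.smul_mul, Matrix.mul_smul, smul_smul,
          show cMat q k * cMat q k = cMat q k ^ 2 from (pow_two _).symm,
          show ((q : ℂ) * (q : ℂ)) = (q : ℂ) ^ 2 from (pow_two _).symm]
      -- rewrite the RHS into block form
      rw [hC2, aux_reindex_map, Matrix.fromBlocks_map,
        Matrix.map_zero _ (map_zero (algebraMap ℂ R)), aux_map_alg_smul,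
        ← aux_reindex_smul, ← aux_reindex_smul, Matrix.fromBlocks_smul,
        Matrix.fromBlocks_smul]
      simp only [smul_zero]
      rw [show (((q : ℂ) ^ 2)⁻¹ • ((q : ℂ) ^ 2) •
            ((cMat q k ^ 2).map (algebraMap ℂ R)) : Matrix _ _ R)
          = (cMat q k ^ 2).map (algebraMap ℂ R) by
        rw [smul_smul, inv_mul_cancel₀ hq2, one_smul]]
      -- rewrite the LHS into block form
      rw [pow_two, hE1, aux_reindex_mul, ← aux_reindex_sub, aux_reindex_inj,
        Matrix.fromBlocks_multiply, aux_fromBlocks_sub, Matrix.fromBlocks_inj]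
      have hS : (((q : ℂ) ^ 2) • ∑ i ∈ Finset.range (k + 1), star (x i) * x i) - y * (1 - y)
          = ((((q : ℂ) ^ 2) • ∑ i ∈ Finset.range k, star (x i) * x i) - y * (1 - y))
            + ((q : ℂ) ^ 2) • (star (x k) * x k) := by
        rw [Finset.sum_range_succ, smul_add]
        abel
      refine ⟨?_, ?_, ?_, ?_⟩
      · -- (1,1) block
        rw [aux_smul_alg_mul, add_sub_right_comm,
          show eMat q y x (fun i => star (x i)) φ k * eMat q y x (fun i => star (x i)) φ k
            = eMat q y x (fun i => star (x i)) φ k ^ 2 from (pow_two _).symm,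
          show cMat q k * cMat q k = cMat q k ^ 2 from (pow_two _).symm,
          hIH, hS, add_smul]
        congr 1
        conv_rhs => rw [smul_assoc, aux_smul_smulc, ← smul_assoc, smul_smul,
          mul_inv_cancel₀ hq2, one_smul]
      · -- (1,2) block
        rw [hc1, Matrix.mul_sub, Matrix.mul_one]
        abel
      · -- (2,1) block
        rw [hc2, Matrix.sub_mul, Matrix.one_mul]
        abel
      · -- (2,2) block
        have hFF : (1 - (eMat q y x (fun i => star (x i)) φ k).map φ)
              * (1 - (eMat q y x (fun i => star (x i)) φ k).map φ)
              - (1 - (eMat q y x (fun i => star (x i)) φ k).map φ)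
            = (eMat q y x (fun i => star (x i)) φ k).map φ
              * (eMat q y x (fun i => star (x i)) φ k).map φ
              - (eMat q y x (fun i => star (x i)) φ k).map φ := by
          noncomm_ring
        rw [aux_smul_alg_mul, add_sub_assoc, hFF, ← aux_map_phi_mul, ← aux_map_phi_sub,
          show eMat q y x (fun i => star (x i)) φ k * eMat q y x (fun i => star (x i)) φ k
            = eMat q y x (fun i => star (x i)) φ k ^ 2 from (pow_two _).symm,
          show cMat q k * cMat q k = cMat q k ^ 2 from (pow_two _).symm,
          hIH]
        rw [show (((q : ℂ) ^ 2)⁻¹ •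
              ((cMat q k ^ 2).map (algebraMap ℂ R)) : Matrix _ _ R)
            = ((((q : ℂ) ^ 2)⁻¹ • (cMat q k ^ 2)).map (algebraMap ℂ R)) from
          (aux_map_alg_smul _ _).symm]
        rw [aux_map_phi_smul_alg, aux_map_alg_smul, aux_smul_smulc, ← add_smul]
        congr 1
        -- scalar identity in R
        have hφS : φ ((((q : ℂ) ^ 2) • ∑ i ∈ Finset.range k, star (x i) * x i)
              - y * (1 - y))
            = (((q : ℂ) ^ 6) • ∑ i ∈ Finset.range k, star (x i) * x i)
              - (((q : ℂ) ^ 2) • y - ((q : ℂ) ^ 4) • (y * y)) := by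
          rw [map_sub, _root_.map_smul, map_sum, _root_.map_mul, map_sub, _root_.map_one, hφy]
          congr 1
          · rw [show ∑ i ∈ Finset.range k, φ (star (x i) * x i)
                = ((q : ℂ) ^ 4) • ∑ i ∈ Finset.range k, star (x i) * x i by
              rw [Finset.smul_sum]
              refine Finset.sum_congr rfl fun i _ => ?_
              rw [_root_.map_mul, hφxs, hφx, smul_mul_assoc, mul_smul_comm, smul_smul,
                ← pow_add]]
            rw [smul_smul, ← pow_add]
          · rw [mul_sub, mul_one, smul_mul_assoc, mul_smul_comm, smul_smul, ← pow_add]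
        rw [hφS, hxxsi k hkn, Finset.sum_range_succ, mul_sub y 1 y, mul_one y]
        match_scalars <;> field_simp <;> ring
  refine ⟨fun k hk => main k hk, fun hs => ?_⟩
  have h := main n le_rfl
  have hzero : (((q : ℂ) ^ 2) • ∑ i ∈ Finset.range n, star (x i) * x i) - y * (1 - y)
      = (0 : R) := by
    rw [hs, mul_sub, mul_one, pow_two]
    abel
  rw [hzero, zero_smul] at h
  exact sub_eq_zero.mp h
end
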